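/- arXiv:2508.14378 — 2 statements merged into one kernel-verified Lean document; each statement's English description precedes it below -/
import Mathlib

section
/- Let k be a field and n ≥ 1. The map θ : (k[S_n] ⊗_{k[S_{n-1}]} k[S_n]) ⊕ k[S_n] → k[S_{n+1}] defined by θ(g₁ ⊗ g₂, g₃) = g₁·(n, n+1)·g₂ + g₃ is an isomorphism of (k[S_n], k[S_n])-bimodules. (Equivalently, ind ∘ res ⊕ id ≅ res ∘ ind as functors on k[S_n]-modules.) -/
/-! Let `k` be a field and `n ≥ 1`.  We realize `S_{n+1} = Equiv.Perm (Fin (n+1))`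
(letters `1,…,n+1` are indices `0,…,n`), `S_n` as the stabilizer `Hgp` of the last letter,
and `S_{n-1}` as the subgroup `Kgp` fixing the letters `n` and `n+1`.  The map
`θ : (k[S_n] ⊗_{k[S_{n-1}]} k[S_n]) ⊕ k[S_n] → k[S_{n+1}]`,
`θ(g₁ ⊗ g₂, g₃) = g₁·(n,n+1)·g₂ + g₃`, is an isomorphism of `(k[S_n],k[S_n])`-bimodules.
This is expressed as: the `k`-linear map `Θ` on `(k[S_n] ⊗[k] k[S_n]) × k[S_n]` given by the
same formula is surjective with kernel exactly the submodule `Rel × ⊥`, where `Rel` is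
spanned by the balancing relations `(g·c) ⊗ h − g ⊗ (c·h)` (`c ∈ S_{n-1}`) defining the
tensor product over `k[S_{n-1}]`; moreover `Θ` intertwines the left and right
`k[S_n]`-actions. -/

noncomputable section

open scoped TensorProduct

variable (k : Type*) [Field k] (n : ℕ)

/-- index of the letter `n` in `Fin (n+1)` -/
def aIdx : Fin (n+1) := ⟨n-1, by omega⟩

/-- index of the letter `n+1` in `Fin (n+1)` -/
def bIdx : Fin (n+1) := ⟨n, by omega⟩

/-- the subgroup `S_n ⊆ S_{n+1}` of permutations fixing the letter `n+1` -/
def Hgp : Subgroup (Equiv.Perm (Fin (n+1))) :=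
  MulAction.stabilizer (Equiv.Perm (Fin (n+1))) (bIdx n)

/-- the subgroup `S_{n-1} ⊆ S_{n+1}` of permutations fixing the letters `n` and `n+1` -/
def Kgp : Subgroup (Equiv.Perm (Fin (n+1))) :=
  MulAction.stabilizer (Equiv.Perm (Fin (n+1))) (bIdx n) ⊓
    MulAction.stabilizer (Equiv.Perm (Fin (n+1))) (aIdx n)

lemma Kgp_le_Hgp : Kgp n ≤ Hgp n := inf_le_left

/-- the group algebra `k[S_{n+1}]` -/
abbrev GA := MonoidAlgebra k (Equiv.Perm (Fin (n+1)))

/-- the group algebra `k[S_n]` -/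
abbrev HA := MonoidAlgebra k (Hgp n)

/-- the inclusion `k[S_n] → k[S_{n+1}]` -/
def ι : HA k n →ₐ[k] GA k n :=
  MonoidAlgebra.lift k (GA k n) (Hgp n)
    ((MonoidAlgebra.of k (Equiv.Perm (Fin (n+1)))).comp (Hgp n).subtype)

/-- the transposition `(n, n+1)` as an element of `k[S_{n+1}]` -/
def sEl : GA k n :=
  MonoidAlgebra.of k (Equiv.Perm (Fin (n+1))) (Equiv.swap (aIdx n) (bIdx n))

/-- `θ₀(x ⊗ y) = x · (n,n+1) · y` -/
def θ₀ : (HA k n) ⊗[k] (HA k n) →ₗ[k] GA k n :=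
  TensorProduct.lift
    (LinearMap.mk₂ k (fun x y => ι k n x * sEl k n * ι k n y)
      (fun x x' y => by (try dsimp only); rw [map_add, add_mul, add_mul])
      (fun c x y => by (try dsimp only); rw [map_smul, smul_mul_assoc, smul_mul_assoc])
      (fun x y y' => by (try dsimp only); rw [map_add, mul_add])
      (fun c x y => by (try dsimp only); rw [map_smul, mul_smul_comm]))

/-- the balancing relations defining `k[S_n] ⊗_{k[S_{n-1}]} k[S_n]` as a quotient of
`k[S_n] ⊗[k] k[S_n]` -/
def balRel : Submodule k ((HA k n) ⊗[k] (HA k n)) :=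
  Submodule.span k
    { t | ∃ (g h : Hgp n) (c : Kgp n),
        t = (MonoidAlgebra.of k (Hgp n) (g * Subgroup.inclusion (Kgp_le_Hgp n) c)) ⊗ₜ[k]
              (MonoidAlgebra.of k (Hgp n) h)
          - (MonoidAlgebra.of k (Hgp n) g) ⊗ₜ[k]
              (MonoidAlgebra.of k (Hgp n) (Subgroup.inclusion (Kgp_le_Hgp n) c * h)) }

/-- the combined map `Θ(x ⊗ y, g) = x·(n,n+1)·y + g` on `(k[S_n] ⊗[k] k[S_n]) × k[S_n]` -/
def Θ : ((HA k n) ⊗[k] (HA k n)) × (HA k n) →ₗ[k] GA k n :=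
  LinearMap.coprod (θ₀ k n) (ι k n).toLinearMap

/-! Write `s = (n, n+1)`. A permutation of `n+1` letters either fixes `n+1`, or it is `g s h` with
`g, h ∈ S_n` (take `g = (n, w(n+1))`), and `g s h = g' s h'` exactly when `g' = g c`, `h = c h'`
for some `c ∈ S_n ∩ s S_n s = S_{n-1}`. So `S_{n+1} = S_n ⊔ S_n s S_n`, and the double coset
`S_n s S_n` is `S_n ×_{S_{n-1}} S_n`. Linearly: choosing such a factorisation for every
`w ∉ S_n` gives a section `Θsec` of `Θ`, and `Θsec ∘ Θ` is the identity modulo `balRel × 0`. -/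

theorem LinearMap.ker_eq_of_mkQ_comp_eq {R M N : Type*} [Ring R] [AddCommGroup M] [Module R M]
    [AddCommGroup N] [Module R N] {f : M →ₗ[R] N} {g : N →ₗ[R] M} {S : Submodule R M}
    (hS : S ≤ LinearMap.ker f) (hgf : S.mkQ ∘ₗ g ∘ₗ f = S.mkQ) : LinearMap.ker f = S := by
  refine le_antisymm (fun x hx => ?_) hS
  have hx' := LinearMap.congr_fun hgf x
  rwa [LinearMap.comp_apply, LinearMap.comp_apply, LinearMap.mem_ker.mp hx, map_zero, map_zero,
    eq_comm, Submodule.mkQ_apply, Submodule.Quotient.mk_eq_zero] at hx'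

namespace Equiv.Perm

variable {α : Type*} [DecidableEq α] {a b : α}

theorem mul_swap_mul_apply_ne (hab : a ≠ b) {g h : Perm α} (hg : g b = b) (hh : h b = b) :
    (g * swap a b * h) b ≠ b := by
  rw [mul_apply, mul_apply, hh, swap_apply_right]
  exact fun e => hab (g.injective (e.trans hg.symm))

theorem exists_mul_swap_mul_eq (hab : a ≠ b) {w : Perm α} (hw : w b ≠ b) :
    ∃ g h : Perm α, g b = b ∧ h b = b ∧ g * swap a b * h = w :=
  ⟨swap a (w b), swap a b * swap a (w b) * w, swap_apply_of_ne_of_ne hab.symm hw.symm,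
    by simp [mul_apply], by simp [mul_assoc, swap_mul_self_mul]⟩

theorem exists_eq_mul_of_mul_swap_mul_eq {g h g' h' : Perm α} (hg : g b = b) (hh : h b = b)
    (hg' : g' b = b) (hh' : h' b = b) (heq : g * swap a b * h = g' * swap a b * h') :
    ∃ c : Perm α, c a = a ∧ c b = b ∧ g' = g * c ∧ h = c * h' := by
  obtain ⟨c, rfl⟩ : ∃ c, g' = g * c := ⟨g⁻¹ * g', by group⟩
  have hca : c a = a := by
    simpa [mul_apply, hh, hh', eq_comm] using congrArg (· b) heq
  have hcb : c b = b := g.injective (by rwa [hg])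
  refine ⟨c, hca, hcb, rfl, ?_⟩
  rwa [mul_assoc g c, mul_swap_eq_swap_mul c, hca, hcb, ← mul_assoc, mul_assoc _ _ h',
    mul_right_inj] at heq

end Equiv.Perm

variable {n}

lemma aIdx_ne_bIdx (hn : 1 ≤ n) : aIdx n ≠ bIdx n := by
  simp only [aIdx, bIdx, ne_eq, Fin.mk.injEq]
  omega

variable (n) in
def mulSwapMul (p : Hgp n × Hgp n) : Equiv.Perm (Fin (n+1)) :=
  p.1 * Equiv.swap (aIdx n) (bIdx n) * p.2

lemma mulSwapMul_notMem_Hgp (hn : 1 ≤ n) (p : Hgp n × Hgp n) : mulSwapMul n p ∉ Hgp n :=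
  Equiv.Perm.mul_swap_mul_apply_ne (aIdx_ne_bIdx hn) p.1.2 p.2.2

lemma mem_range_mulSwapMul (hn : 1 ≤ n) {w : Equiv.Perm (Fin (n+1))} (hw : w ∉ Hgp n) :
    w ∈ Set.range (mulSwapMul n) := by
  obtain ⟨g, h, hg, hh, rfl⟩ := Equiv.Perm.exists_mul_swap_mul_eq (aIdx_ne_bIdx hn) hw
  exact ⟨(⟨g, hg⟩, ⟨h, hh⟩), rfl⟩

lemma exists_Kgp_of_mulSwapMul_eq {p q : Hgp n × Hgp n} (h : mulSwapMul n p = mulSwapMul n q) :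
    ∃ c : Kgp n, q.1 = p.1 * Subgroup.inclusion (Kgp_le_Hgp n) c ∧
      p.2 = Subgroup.inclusion (Kgp_le_Hgp n) c * q.2 := by
  obtain ⟨c, hca, hcb, h1, h2⟩ :=
    Equiv.Perm.exists_eq_mul_of_mul_swap_mul_eq p.1.2 p.2.2 q.1.2 q.2.2 h
  exact ⟨⟨c, hcb, hca⟩, Subtype.ext h1, Subtype.ext h2⟩

variable {k}

lemma ι_of (u : Hgp n) :
    ι k n (MonoidAlgebra.of k (Hgp n) u) = MonoidAlgebra.of k (Equiv.Perm (Fin (n+1))) u := by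
  simp [ι]

lemma Θ_tmul (x y z : HA k n) :
    Θ k n (x ⊗ₜ y, z) = ι k n x * sEl k n * ι k n y + ι k n z := rfl

lemma θ₀_of_tmul_of (p : Hgp n × Hgp n) :
    θ₀ k n (MonoidAlgebra.of k (Hgp n) p.1 ⊗ₜ MonoidAlgebra.of k (Hgp n) p.2)
      = MonoidAlgebra.of k (Equiv.Perm (Fin (n+1))) (mulSwapMul n p) := by
  simp only [θ₀, TensorProduct.lift.tmul, LinearMap.mk₂_apply, ι_of, sEl, ← map_mul, mulSwapMul]

lemma Θ_inl (x : HA k n ⊗[k] HA k n) : Θ k n (x, 0) = θ₀ k n x := by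
  simp [Θ]

lemma Θ_inr (x : HA k n) : Θ k n (0, x) = ι k n x := by
  simp [Θ]

open Classical in
variable (k n) in
def Θsec : GA k n →ₗ[k] ((HA k n) ⊗[k] (HA k n)) × (HA k n) :=
  (MonoidAlgebra.basis _ k).constr k fun w =>
    if hw : w ∈ Hgp n then (0, MonoidAlgebra.of k (Hgp n) ⟨w, hw⟩)
    else
      let p := Function.invFun (mulSwapMul n) w
      (MonoidAlgebra.of k (Hgp n) p.1 ⊗ₜ MonoidAlgebra.of k (Hgp n) p.2, 0)

lemma Θsec_of_mem {w : Equiv.Perm (Fin (n+1))} (hw : w ∈ Hgp n) :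
    Θsec k n (MonoidAlgebra.of k _ w) = (0, MonoidAlgebra.of k (Hgp n) ⟨w, hw⟩) := by
  rw [MonoidAlgebra.of_apply, ← MonoidAlgebra.basis_apply, Θsec, Module.Basis.constr_basis,
    dif_pos hw]

lemma Θsec_of_notMem {w : Equiv.Perm (Fin (n+1))} (hw : w ∉ Hgp n) :
    Θsec k n (MonoidAlgebra.of k _ w) =
      (MonoidAlgebra.of k (Hgp n) (Function.invFun (mulSwapMul n) w).1 ⊗ₜ
        MonoidAlgebra.of k (Hgp n) (Function.invFun (mulSwapMul n) w).2, 0) := by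
  rw [MonoidAlgebra.of_apply, ← MonoidAlgebra.basis_apply, Θsec, Module.Basis.constr_basis,
    dif_neg hw]

lemma Θ_Θsec_of (hn : 1 ≤ n) (w : Equiv.Perm (Fin (n+1))) :
    Θ k n (Θsec k n (MonoidAlgebra.of k _ w)) = MonoidAlgebra.of k _ w := by
  by_cases hw : w ∈ Hgp n
  · rw [Θsec_of_mem hw, Θ_inr, ι_of]
  · rw [Θsec_of_notMem hw, Θ_inl, θ₀_of_tmul_of,
      Function.invFun_eq (mem_range_mulSwapMul hn hw)]

lemma Θ_comp_Θsec (hn : 1 ≤ n) : Θ k n ∘ₗ Θsec k n = LinearMap.id := by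
  refine (MonoidAlgebra.basis _ k).ext fun w => ?_
  rw [MonoidAlgebra.basis_apply, ← MonoidAlgebra.of_apply]
  exact Θ_Θsec_of hn w

lemma mulSwapMul_mul_inclusion (g h : Hgp n) (c : Kgp n) :
    mulSwapMul n (g * Subgroup.inclusion (Kgp_le_Hgp n) c, h)
      = mulSwapMul n (g, Subgroup.inclusion (Kgp_le_Hgp n) c * h) := by
  have hca : (c : Equiv.Perm (Fin (n+1))) (aIdx n) = aIdx n := c.2.2
  have hcb : (c : Equiv.Perm (Fin (n+1))) (bIdx n) = bIdx n := c.2.1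
  simp only [mulSwapMul, Subgroup.coe_mul, Subgroup.coe_inclusion, mul_assoc,
    Equiv.mul_swap_eq_swap_mul (c : Equiv.Perm (Fin (n+1))), hca, hcb]

lemma balRel_le_ker : balRel k n ≤ LinearMap.ker (θ₀ k n) := by
  rw [balRel, Submodule.span_le]
  rintro t ⟨g, h, c, rfl⟩
  rw [SetLike.mem_coe, LinearMap.mem_ker, map_sub, sub_eq_zero]
  exact (θ₀_of_tmul_of (_, _)).trans ((congrArg _ (mulSwapMul_mul_inclusion g h c)).trans
    (θ₀_of_tmul_of (_, _)).symm)

lemma balRel_prod_bot_le_ker :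
    (balRel k n).prod (⊥ : Submodule k (HA k n)) ≤ LinearMap.ker (Θ k n) :=
  (Submodule.prod_mono balRel_le_ker bot_le).trans (LinearMap.ker_prod_ker_le_ker_coprod _ _)

lemma Θsec_Θ_of_tmul_of_sub_mem (hn : 1 ≤ n) (p : Hgp n × Hgp n) :
    Θsec k n (Θ k n (MonoidAlgebra.of k (Hgp n) p.1 ⊗ₜ MonoidAlgebra.of k (Hgp n) p.2, 0))
      - (MonoidAlgebra.of k (Hgp n) p.1 ⊗ₜ MonoidAlgebra.of k (Hgp n) p.2, 0)
      ∈ (balRel k n).prod (⊥ : Submodule k (HA k n)) := by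
  rw [Θ_inl, θ₀_of_tmul_of, Θsec_of_notMem (mulSwapMul_notMem_Hgp hn p), Prod.mk_sub_mk,
    sub_zero]
  set q := Function.invFun (mulSwapMul n) (mulSwapMul n p)
  obtain ⟨c, h1, h2⟩ := exists_Kgp_of_mulSwapMul_eq (Function.invFun_eq ⟨p, rfl⟩).symm
  refine Submodule.mem_prod.mpr ⟨Submodule.subset_span ⟨p.1, q.2, c, ?_⟩, zero_mem _⟩
  rw [← h1, ← h2]

lemma Θsec_Θ_inr_of (u : Hgp n) :
    Θsec k n (Θ k n (0, MonoidAlgebra.of k (Hgp n) u)) = (0, MonoidAlgebra.of k (Hgp n) u) := by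
  rw [Θ_inr, ι_of, Θsec_of_mem u.2]

lemma mkQ_comp_Θsec_comp_Θ (hn : 1 ≤ n) :
    ((balRel k n).prod (⊥ : Submodule k (HA k n))).mkQ ∘ₗ Θsec k n ∘ₗ Θ k n
      = ((balRel k n).prod (⊥ : Submodule k (HA k n))).mkQ := by
  ext g h
  all_goals simp only [LinearMap.comp_apply, TensorProduct.AlgebraTensorModule.curry_apply,
    LinearMap.inl_apply, LinearMap.inr_apply, TensorProduct.curry_apply,
    LinearMap.coe_restrictScalars, MonoidAlgebra.lsingle_apply, ← MonoidAlgebra.of_apply,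
    Submodule.mkQ_apply]
  · exact (Submodule.Quotient.eq _).mpr (Θsec_Θ_of_tmul_of_sub_mem hn (g, h))
  · rw [Θsec_Θ_inr_of]

theorem stmt7 (k : Type*) [Field k] (n : ℕ) (hn : 1 ≤ n) :
    LinearMap.range (Θ k n) = ⊤
    ∧ LinearMap.ker (Θ k n) = (balRel k n).prod (⊥ : Submodule k (HA k n))
    ∧ (∀ (u : Hgp n) (g₁ g₂ g₃ : HA k n),
        Θ k n ((MonoidAlgebra.of k (Hgp n) u * g₁) ⊗ₜ[k] g₂,
               MonoidAlgebra.of k (Hgp n) u * g₃)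
          = ι k n (MonoidAlgebra.of k (Hgp n) u) * Θ k n (g₁ ⊗ₜ[k] g₂, g₃))
    ∧ (∀ (u : Hgp n) (g₁ g₂ g₃ : HA k n),
        Θ k n (g₁ ⊗ₜ[k] (g₂ * MonoidAlgebra.of k (Hgp n) u),
               g₃ * MonoidAlgebra.of k (Hgp n) u)
          = Θ k n (g₁ ⊗ₜ[k] g₂, g₃) * ι k n (MonoidAlgebra.of k (Hgp n) u)) := by
  refine ⟨LinearMap.range_eq_top_of_surjective _ fun x =>
      ⟨Θsec k n x, LinearMap.congr_fun (Θ_comp_Θsec hn) x⟩,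
    LinearMap.ker_eq_of_mkQ_comp_eq balRel_prod_bot_le_ker (mkQ_comp_Θsec_comp_Θ hn),
    fun u g₁ g₂ g₃ => ?_, fun u g₁ g₂ g₃ => ?_⟩
  · simp only [Θ_tmul, map_mul, mul_add, mul_assoc]
  · simp only [Θ_tmul, map_mul, add_mul, mul_assoc]

end
end

section
/- Let k be a commutative ring and n ≥ 1. For variables x₁,…,x_n, let Δ(x₁,…,x_n) := ∏_{1≤i<k≤n} (x_i − x_k) be the Vandermonde product. Then ∑_{j=1}^{n} Δ(x₁,…,x_j + 1,…,x_n) = n · Δ(x₁,…,x_n) in k[x₁,…,x_n]. -/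
open Matrix MvPolynomial Finset

/-- Summing the determinants of `A` with the `j`-th column replaced by the `j`-th column of
`M * A` gives `det A * trace M`. -/
lemma sum_det_updateCol_aux {R : Type*} [CommRing R] {n : ℕ}
    (A M : Matrix (Fin n) (Fin n) R) :
    ∑ j, (A.updateCol j (fun i => (M * A) i j)).det = A.det * M.trace := by
  have h : ∀ j, (A.updateCol j (fun i => (M * A) i j)).det
      = (A.adjugate * (M * A)) j j := by
    intro j
    rw [← Matrix.cramer_apply, Matrix.cramer_eq_adjugate_mulVec]
    simp [Matrix.mulVec, Matrix.mul_apply, dotProduct]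
  calc ∑ j, (A.updateCol j (fun i => (M * A) i j)).det
      = ∑ j, (A.adjugate * (M * A)) j j := by simp_rw [h]
    _ = (A.adjugate * (M * A)).trace := rfl
    _ = ((M * A) * A.adjugate).trace := (Matrix.trace_mul_comm _ _).symm
    _ = (M * (A * A.adjugate)).trace := by rw [Matrix.mul_assoc]
    _ = (M * (A.det • 1)).trace := by rw [Matrix.mul_adjugate]
    _ = A.det * M.trace := by
        rw [Matrix.mul_smul, Matrix.mul_one, Matrix.trace_smul, smul_eq_mul]

/-- Binomial expansion, padded out to a sum over `Fin n`. -/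
lemma pow_succ_binomial_aux {R : Type*} [CommRing R] {n : ℕ} (x : R) (i : Fin n) :
    (x + 1) ^ (i : ℕ) = ∑ l : Fin n, ((i : ℕ).choose (l : ℕ) : R) * x ^ (l : ℕ) := by
  rw [Fin.sum_univ_eq_sum_range (fun l => ((i : ℕ).choose l : R) * x ^ l) n]
  rw [← Finset.sum_subset (Finset.range_subset_range.mpr i.isLt)
      (fun l _ hl => by
        rw [Finset.mem_range, not_lt] at hl
        simp [Nat.choose_eq_zero_of_lt hl])]
  rw [add_pow]
  exact Finset.sum_congr rfl fun l _ => by ring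

/-- Let `k` be a commutative ring and `n ≥ 1`.  For the Vandermonde product
`Δ(x₁,…,x_n) = ∏_{i<k} (x_i − x_k)` in `k[x₁,…,x_n]`, one has
`∑_{j=1}^n Δ(x₁,…,x_j+1,…,x_n) = n · Δ(x₁,…,x_n)`, where the `j`-th summand is `Δ` with
`x_j` replaced by `x_j + 1`. -/
theorem stmt11 (k : Type*) [CommRing k] (n : ℕ) (hn : 1 ≤ n) :
    (∑ j : Fin n, MvPolynomial.aeval (R := k)
        (fun i : Fin n =>
          if i = j then MvPolynomial.X i + 1 else (MvPolynomial.X i : MvPolynomial (Fin n) k))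
        (∏ p ∈ Finset.univ.filter (fun p : Fin n × Fin n => p.1 < p.2),
          (MvPolynomial.X p.1 - MvPolynomial.X p.2)))
      = (n : MvPolynomial (Fin n) k) *
          ∏ p ∈ Finset.univ.filter (fun p : Fin n × Fin n => p.1 < p.2),
            (MvPolynomial.X p.1 - MvPolynomial.X p.2) := by
  classical
  set R := MvPolynomial (Fin n) k with hR
  set S : Finset (Fin n × Fin n) := Finset.univ.filter (fun p : Fin n × Fin n => p.1 < p.2)
    with hS
  set P : R := ∏ p ∈ S, (MvPolynomial.X p.1 - MvPolynomial.X p.2) with hPdef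
  set W : Matrix (Fin n) (Fin n) R :=
    Matrix.of fun i j => (MvPolynomial.X j : R) ^ (i : ℕ) with hW
  set B : Matrix (Fin n) (Fin n) R :=
    Matrix.of fun i l : Fin n => (((i : ℕ).choose (l : ℕ) : ℕ) : R) with hB
  have hprod : ∀ f : Fin n → Fin n → R,
      ∏ p ∈ S, f p.1 p.2 = ∏ i : Fin n, ∏ j ∈ Finset.Ioi i, f i j := fun f =>
    Finset.prod_finset_product' _ _ _ (by simp [hS])
  have hWdet : W.det = ∏ i : Fin n, ∏ j ∈ Finset.Ioi i,
      (MvPolynomial.X j - MvPolynomial.X i : R) := by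
    rw [← Matrix.det_transpose]
    have : Wᵀ = Matrix.vandermonde (fun i : Fin n => (MvPolynomial.X i : R)) := by
      ext i j
      simp [hW, Matrix.vandermonde]
    rw [this, Matrix.det_vandermonde]
  have hP : P = (-1 : R) ^ S.card * W.det := by
    calc P = ∏ p ∈ S, (-1 : R) * (MvPolynomial.X p.2 - MvPolynomial.X p.1) :=
          Finset.prod_congr rfl fun p _ => by ring
      _ = (∏ _p ∈ S, (-1 : R)) * ∏ p ∈ S, (MvPolynomial.X p.2 - MvPolynomial.X p.1) :=
          Finset.prod_mul_distrib
      _ = (-1 : R) ^ S.card * W.det := by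
          rw [Finset.prod_const, hprod (fun i j => MvPolynomial.X j - MvPolynomial.X i), hWdet]
  have haeval : ∀ j : Fin n,
      MvPolynomial.aeval (R := k)
        (fun i : Fin n =>
          if i = j then MvPolynomial.X i + 1 else (MvPolynomial.X i : R)) W.det
        = (W.updateCol j (fun i => (B * W) i j)).det := by
    intro j
    rw [AlgHom.map_det, AlgHom.mapMatrix_apply]
    congr 1
    refine Matrix.ext fun i c => ?_
    rw [Matrix.map_apply, Matrix.updateCol_apply]
    by_cases hc : c = j
    · rw [if_pos hc]; subst hc
      show MvPolynomial.aeval _ ((MvPolynomial.X c : R) ^ (i : ℕ)) = (B * W) i c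
      rw [map_pow, MvPolynomial.aeval_X, if_pos rfl,
        pow_succ_binomial_aux (MvPolynomial.X c : R) i]
      simp [Matrix.mul_apply, hB, hW]
    · rw [if_neg hc]
      show MvPolynomial.aeval _ ((MvPolynomial.X c : R) ^ (i : ℕ)) = W i c
      rw [map_pow, MvPolynomial.aeval_X, if_neg hc]
      rfl
  have htr : B.trace = (n : R) := by
    simp [Matrix.trace, Matrix.diag, hB]
  calc (∑ j : Fin n, MvPolynomial.aeval (R := k)
        (fun i : Fin n =>
          if i = j then MvPolynomial.X i + 1 else (MvPolynomial.X i : R)) P)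
      = ∑ j : Fin n, (-1 : R) ^ S.card *
          MvPolynomial.aeval (R := k)
            (fun i : Fin n =>
              if i = j then MvPolynomial.X i + 1 else (MvPolynomial.X i : R)) W.det := by
        refine Finset.sum_congr rfl fun j _ => ?_
        simp only [hP, _root_.map_mul, _root_.map_pow, _root_.map_neg, _root_.map_one]
    _ = (-1 : R) ^ S.card * ∑ j : Fin n, (W.updateCol j (fun i => (B * W) i j)).det := by
        rw [Finset.mul_sum]
        exact Finset.sum_congr rfl fun j _ => by rw [haeval j]
    _ = (-1 : R) ^ S.card * (W.det * (n : R)) := by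
        rw [sum_det_updateCol_aux W B, htr]
    _ = (n : R) * P := by rw [hP]; ring
end
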